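/- arXiv:2509.12971 — 2 statements merged into one kernel-verified Lean document; each statement's English description precedes it below -/
import Mathlib

section
/- Unwrapping identity: let γ[k] be a real sequence, y[k] = M_λ(γ[k]), ε[k] = γ[k] - y[k] ∈ 2λℤ, and η a noise sequence with y_η[k] = y[k] + η[k]. If |Δ^N γ[k] + Δ^N η[k]| < λ for all k, then M_λ(Δ^N y_η[k]) - Δ^N y_η[k] = Δ^N ε[k] for all k. -/
noncomputable def modLam (lam g : ℝ) : ℝ := g - 2 * lam * ⌊(g + lam) / (2 * lam)⌋

def seqDiff (x : ℤ → ℝ) : ℤ → ℝ := fun k => x (k + 1) - x k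

lemma seqDiff_iter_add (N : ℕ) (x y : ℤ → ℝ) :
    seqDiff^[N] (fun k => x k + y k) = fun k => seqDiff^[N] x k + seqDiff^[N] y k := by
  induction N generalizing x y with
  | zero => rfl
  | succ n ih =>
    rw [Function.iterate_succ_apply, Function.iterate_succ_apply,
      Function.iterate_succ_apply]
    have : seqDiff (fun k => x k + y k) = fun k => seqDiff x k + seqDiff y k := by
      funext k; simp only [seqDiff]; ring
    rw [this, ih]

lemma seqDiff_iter_neg (N : ℕ) (x : ℤ → ℝ) :
    seqDiff^[N] (fun k => -x k) = fun k => -seqDiff^[N] x k := by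
  induction N generalizing x with
  | zero => rfl
  | succ n ih =>
    rw [Function.iterate_succ_apply, Function.iterate_succ_apply]
    have : seqDiff (fun k => -x k) = fun k => -seqDiff x k := by
      funext k; simp only [seqDiff]; ring
    rw [this, ih]

lemma seqDiff_iter_mult (N : ℕ) (c : ℝ) (x : ℤ → ℝ) (h : ∀ k, ∃ m : ℤ, x k = c * m) :
    ∀ k, ∃ m : ℤ, seqDiff^[N] x k = c * m := by
  induction N generalizing x with
  | zero => exact h
  | succ n ih =>
    rw [Function.iterate_succ_apply]
    apply ih
    intro k
    obtain ⟨m1, h1⟩ := h (k + 1)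
    obtain ⟨m2, h2⟩ := h k
    refine ⟨m1 - m2, ?_⟩
    simp only [seqDiff, h1, h2]
    push_cast
    ring

lemma modLam_periodic (lam x : ℝ) (hlam : 0 < lam) (m : ℤ) :
    modLam lam (x + 2 * lam * m) = modLam lam x := by
  unfold modLam
  have h2 : (2 : ℝ) * lam ≠ 0 := by positivity
  have : (x + 2 * lam * m + lam) / (2 * lam) = (x + lam) / (2 * lam) + m := by
    field_simp; ring
  rw [this, Int.floor_add_intCast]
  push_cast
  ring

lemma modLam_small (lam x : ℝ) (hlam : 0 < lam) (h : |x| < lam) :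
    modLam lam x = x := by
  unfold modLam
  have h2 : (0 : ℝ) < 2 * lam := by positivity
  have hfl : ⌊(x + lam) / (2 * lam)⌋ = 0 := by
    rw [Int.floor_eq_zero_iff]
    rw [abs_lt] at h
    constructor
    · apply div_nonneg (by linarith) (by linarith)
    · rw [div_lt_one h2]; linarith
  rw [hfl]; simp

theorem unwrapping_identity (N : ℕ) (lam : ℝ) (hlam : 0 < lam)
    (γ η : ℤ → ℝ)
    (y : ℤ → ℝ) (hy : ∀ k, y k = modLam lam (γ k))
    (ε : ℤ → ℝ) (hε : ∀ k, ε k = γ k - y k)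
    (yη : ℤ → ℝ) (hyη : ∀ k, yη k = y k + η k)
    (hbound : ∀ k : ℤ, |seqDiff^[N] γ k + seqDiff^[N] η k| < lam) :
    ∀ k : ℤ, modLam lam (seqDiff^[N] yη k) - seqDiff^[N] yη k
      = seqDiff^[N] ε k := by
  intro k
  have hεm : ∀ j, ∃ m : ℤ, ε j = 2 * lam * m := by
    intro j
    refine ⟨⌊(γ j + lam) / (2 * lam)⌋, ?_⟩
    rw [hε j, hy j]; unfold modLam; ring
  obtain ⟨m, hm⟩ := seqDiff_iter_mult N (2 * lam) ε hεm k
  have hdecomp : yη = fun j => (fun i => γ i + η i) j + (fun i => -ε i) j := by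
    funext j; simp only; rw [hyη j, hε j]; ring
  have hsum : seqDiff^[N] yη k
      = (seqDiff^[N] γ k + seqDiff^[N] η k) + (- seqDiff^[N] ε k) := by
    rw [hdecomp, seqDiff_iter_add, seqDiff_iter_add, seqDiff_iter_neg]
  have key : seqDiff^[N] yη k
      = (seqDiff^[N] γ k + seqDiff^[N] η k) + 2 * lam * ((-m : ℤ) : ℝ) := by
    rw [hsum, hm]; push_cast; ring
  rw [key, modLam_periodic lam _ hlam (-m), modLam_small lam _ hlam (hbound k), hm]
  push_cast; ring
end

section
/- Jittered second-difference bound: let g : ℝ → ℝ be twice continuously differentiable with ‖g'‖_∞ ≤ Ω‖g‖_∞ and ‖g''‖_∞ ≤ Ω²‖g‖_∞. Let t_k = kT + μ_k with |μ_k| ≤ νT for all k, and γ[k] = g(t_k). Then for all k, |γ[k] + γ[k+2] - 2γ[k+1]| ≤ ((TΩ)² + 4νTΩ)·‖g‖_∞. -/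
/-!
On the uniform grid the second difference of `g` is the increment over one step of
`x ↦ g (x + T) - g x`, whose derivative `g' (x + T) - g' x` is at most `Ω² ‖g‖ T` by the
mean value theorem applied to `g'`; this gives `(TΩ)² ‖g‖`. Moving the three samples to the
jittered instants changes them by at most `Ω ‖g‖ ν T` each, with weights `1, 2, 1`, which
accounts for the remaining `4 ν T Ω ‖g‖`.
-/

theorem abs_sub_le_of_abs_deriv_le {f : ℝ → ℝ} {C : ℝ} (hf : Differentiable ℝ f)
    (hC : ∀ x, |deriv f x| ≤ C) (a b : ℝ) : |f b - f a| ≤ C * |b - a| := by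
  simpa only [Real.norm_eq_abs] using
    convex_univ.norm_image_sub_le_of_norm_deriv_le (fun x _ => hf x) (fun x _ => hC x)
      (Set.mem_univ a) (Set.mem_univ b)

theorem abs_second_difference_le {f : ℝ → ℝ} {M : ℝ} (hf : ContDiff ℝ 2 f)
    (hM : ∀ x, |iteratedDeriv 2 f x| ≤ M) (a h : ℝ) :
    |f a + f (a + 2 * h) - 2 * f (a + h)| ≤ M * h ^ 2 := by
  have hf' : Differentiable ℝ (deriv f) :=
    ((contDiff_succ_iff_deriv (n := 1)).mp hf).2.2.differentiable one_ne_zero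
  have hf'' : ∀ x, |deriv (deriv f) x| ≤ M := by
    simpa only [iteratedDeriv_succ', iteratedDeriv_zero] using hM
  have hshift : ∀ x, HasDerivAt (fun y => f (y + h) - f y) (deriv f (x + h) - deriv f x) x :=
    fun x => ((hf.differentiable two_ne_zero (x + h)).hasDerivAt.comp_add_const x h).sub
      (hf.differentiable two_ne_zero x).hasDerivAt
  have hshift_bound : ∀ x, |deriv (fun y => f (y + h) - f y) x| ≤ M * |h| := fun x => by
    simpa only [(hshift x).deriv, add_sub_cancel_left] using
      abs_sub_le_of_abs_deriv_le hf' hf'' x (x + h)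
  calc |f a + f (a + 2 * h) - 2 * f (a + h)|
      = |(f (a + h + h) - f (a + h)) - (f (a + h) - f a)| := by ring_nf
    _ ≤ M * |h| * |a + h - a| :=
      abs_sub_le_of_abs_deriv_le (fun x => (hshift x).differentiableAt) hshift_bound a (a + h)
    _ = M * h ^ 2 := by rw [add_sub_cancel_left, mul_assoc, ← sq, sq_abs]

theorem abs_second_difference_sub_le {f : ℝ → ℝ} {C : ℝ} (hf : Differentiable ℝ f)
    (hC : ∀ x, |deriv f x| ≤ C) (x₀ x₁ x₂ y₀ y₁ y₂ : ℝ) :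
    |f y₀ + f y₂ - 2 * f y₁| ≤
      |f x₀ + f x₂ - 2 * f x₁| + C * (|y₀ - x₀| + |y₂ - x₂| + 2 * |y₁ - x₁|) := by
  have h₀ := abs_sub_le_of_abs_deriv_le hf hC x₀ y₀
  have h₁ := abs_sub_le_of_abs_deriv_le hf hC x₁ y₁
  have h₂ := abs_sub_le_of_abs_deriv_le hf hC x₂ y₂
  calc |f y₀ + f y₂ - 2 * f y₁|
      = |(f x₀ + f x₂ - 2 * f x₁) + (f y₀ - f x₀) + (f y₂ - f x₂) - 2 * (f y₁ - f x₁)| := by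
        ring_nf
    _ ≤ |f x₀ + f x₂ - 2 * f x₁| + |f y₀ - f x₀| + |f y₂ - f x₂| + 2 * |f y₁ - f x₁| := by
        grw [abs_sub, abs_add_le, abs_add_le, abs_mul, abs_two]
    _ ≤ _ := by linarith

theorem jittered_second_difference_bound_general
    (g : ℝ → ℝ) (hg : ContDiff ℝ 2 g)
    (Ω Bg T ν : ℝ)
    (hBern1 : ∀ t : ℝ, |deriv g t| ≤ Ω * Bg)
    (hBern2 : ∀ t : ℝ, |iteratedDeriv 2 g t| ≤ Ω ^ 2 * Bg)
    (μ : ℤ → ℝ) (hμ : ∀ k : ℤ, |μ k| ≤ ν * T)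
    (t : ℤ → ℝ) (ht : ∀ k : ℤ, t k = k * T + μ k)
    (γ : ℤ → ℝ) (hγ : ∀ k : ℤ, γ k = g (t k)) :
    ∀ k : ℤ, |γ k + γ (k + 2) - 2 * γ (k + 1)| ≤
      ((T * Ω) ^ 2 + 4 * ν * T * Ω) * Bg := by
  intro k
  have hΩBg : 0 ≤ Ω * Bg := (abs_nonneg _).trans (hBern1 0)
  have hjitter : ∀ j : ℤ, |t j - j * T| ≤ ν * T := fun j => by
    rw [ht, add_sub_cancel_left]; exact hμ j
  have hgrid := abs_second_difference_le hg hBern2 (k * T) T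
  have hperturb := abs_second_difference_sub_le (hg.differentiable two_ne_zero) hBern1
    (k * T) (k * T + T) (k * T + 2 * T) (t k) (t (k + 1)) (t (k + 2))
  have h₀ := hjitter k
  have h₁ := hjitter (k + 1)
  have h₂ := hjitter (k + 2)
  push_cast at h₁ h₂
  rw [add_mul, one_mul] at h₁
  rw [add_mul] at h₂
  rw [hγ, hγ, hγ]
  calc _ ≤ _ := hperturb
    _ ≤ Ω ^ 2 * Bg * T ^ 2 + Ω * Bg * (ν * T + ν * T + 2 * (ν * T)) := by gcongr
    _ = ((T * Ω) ^ 2 + 4 * ν * T * Ω) * Bg := by ring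

theorem jittered_second_difference_bound
    (g : ℝ → ℝ) (hg : ContDiff ℝ 2 g)
    (Ω Bg T ν : ℝ) (hΩ : 0 < Ω) (hT : 0 < T) (hν : 0 ≤ ν)
    (hBg : ∀ t : ℝ, |g t| ≤ Bg)
    (hBern1 : ∀ t : ℝ, |deriv g t| ≤ Ω * Bg)
    (hBern2 : ∀ t : ℝ, |iteratedDeriv 2 g t| ≤ Ω ^ 2 * Bg)
    (μ : ℤ → ℝ) (hμ : ∀ k : ℤ, |μ k| ≤ ν * T)
    (t : ℤ → ℝ) (ht : ∀ k : ℤ, t k = k * T + μ k)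
    (γ : ℤ → ℝ) (hγ : ∀ k : ℤ, γ k = g (t k)) :
    ∀ k : ℤ, |γ k + γ (k + 2) - 2 * γ (k + 1)| ≤
      ((T * Ω) ^ 2 + 4 * ν * T * Ω) * Bg :=
  jittered_second_difference_bound_general g hg Ω Bg T ν hBern1 hBern2 μ hμ t ht γ hγ
end
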